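/- arXiv:1607.02962 — 2 statements merged into one kernel-verified Lean document; each statement's English description precedes it below -/
import Mathlib

section
/- For all n, m ∈ ℕ₀, all graphs G₁ ∈ 𝒢_n, G₂ ∈ 𝒢_m, and every x ∈ ℝ^d, the convolution of the graph integrals satisfies (J_n(G₁,·) ∗ J_m(G₂,·))(x) = J_{n+m+1}(G₁ ⊙ G₂, x), where both sides are interpreted as integrals of nonnegative functions (with values in [0,∞]). -/
open MeasureTheory Finset
open scoped ENNReal Classical

noncomputable section

/-- The interior vertices `{1,…,n}` of the vertex set `{0,1,…,n+1}` (as `Fin (n+2)`). -/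
def interiorVerts (n : ℕ) : Finset (Fin (n + 2)) :=
  Finset.univ.filter fun v => v ≠ 0 ∧ v ≠ Fin.last (n + 1)

/-- `ConnIn G a b S` : there is a path from `a` to `b` in `G` using only
vertices in `S ∪ {a, b}`. -/
def ConnIn {k : ℕ} (G : SimpleGraph (Fin k)) (a b : Fin k) (S : Set (Fin k)) : Prop :=
  ∃ w : G.Walk a b, ∀ v ∈ w.support, v = a ∨ v = b ∨ v ∈ S

/-- `π_n(G) = Σ_{I ⊆ [n]} (-1)^{n-|I|} 1{0 ↔ n+1 in G|I}`. -/
def piFun (n : ℕ) (G : SimpleGraph (Fin (n + 2))) : ℤ :=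
  ∑ I ∈ (interiorVerts n).powerset,
    (-1 : ℤ) ^ (n - I.card) *
      (if ConnIn G 0 (Fin.last (n + 1)) ↑I then 1 else 0)

/-- The number of edges of `G`, counted via ordered pairs `i < j`. -/
def edgeCount {k : ℕ} (G : SimpleGraph (Fin k)) : ℕ :=
  (Finset.univ.filter fun p : Fin k × Fin k => p.1 < p.2 ∧ G.Adj p.1 p.2).card

/-- `κ_n(H) = Σ_{G ∈ 𝒢_n, E(G) ⊆ E(H)} (-1)^{|E(H)|-|E(G)|} π_n(G)`. -/
def kappaFun (n : ℕ) (H : SimpleGraph (Fin (n + 2))) : ℤ :=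
  ∑ G ∈ Finset.univ.filter
      (fun G : SimpleGraph (Fin (n + 2)) => G.Connected ∧ G ≤ H),
    (-1 : ℤ) ^ (edgeCount H - edgeCount G) * piFun n G

/-- Embedding of the first factor's vertex set into that of the concatenation. -/
def emb1 (n m : ℕ) : Fin (n + 2) → Fin (n + m + 3) :=
  fun i => ⟨i.1, by have := i.isLt; omega⟩

/-- Embedding of the second factor's vertex set into that of the concatenation:
the vertices `0,…,m+1` of `G₂` are relabelled as `n+1,…,n+m+2`. -/
def emb2 (n m : ℕ) : Fin (m + 2) → Fin (n + m + 3) :=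
  fun j => ⟨n + 1 + j.1, by have := j.isLt; omega⟩

/-- The concatenation `G₁ ⊙ G₂`: the end-vertex `n+1` of `G₁` is identified with the
start-vertex of `G₂` and the edge sets are united. -/
def concatG {n m : ℕ} (G₁ : SimpleGraph (Fin (n + 2))) (G₂ : SimpleGraph (Fin (m + 2))) :
    SimpleGraph (Fin (n + m + 3)) :=
  SimpleGraph.fromRel fun u v =>
    (∃ i j, G₁.Adj i j ∧ u = emb1 n m i ∧ v = emb1 n m j) ∨
    (∃ i j, G₂.Adj i j ∧ u = emb2 n m i ∧ v = emb2 n m j)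


/-- The point configuration `x₀ = 0`, `x₁,…,x_n = xs`, `x_{n+1} = x`. -/
def pts {d n : ℕ} (x : EuclideanSpace ℝ (Fin d)) (xs : Fin n → EuclideanSpace ℝ (Fin d)) :
    Fin (n + 2) → EuclideanSpace ℝ (Fin d) :=
  Fin.cons 0 (Fin.snoc xs x)

/-- `∏_{{i,j} ∈ E(G)} φ(y_i - y_j)` as an `ℝ≥0∞`-valued product. -/
def edgeProdL {d k : ℕ} (φ : EuclideanSpace ℝ (Fin d) → ℝ)
    (G : SimpleGraph (Fin k)) (y : Fin k → EuclideanSpace ℝ (Fin d)) : ℝ≥0∞ :=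
  ∏ p ∈ Finset.univ.filter (fun p : Fin k × Fin k => p.1 < p.2 ∧ G.Adj p.1 p.2),
    ENNReal.ofReal (φ (y p.1 - y p.2))

/-- `J_n(G,x) = ∫ ∏_{{i,j} ∈ E(G)} φ(x_i - x_j) d(x₁,…,x_n)` with `x₀ = 0`, `x_{n+1} = x`,
as a `[0,∞]`-valued integral. -/
def JfunL {d : ℕ} (φ : EuclideanSpace ℝ (Fin d) → ℝ) (n : ℕ)
    (G : SimpleGraph (Fin (n + 2))) (x : EuclideanSpace ℝ (Fin d)) : ℝ≥0∞ :=
  ∫⁻ xs : Fin n → EuclideanSpace ℝ (Fin d), edgeProdL φ G (pts x xs)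

/-!
Split the `n + m + 1` interior points of `G₁ ⊙ G₂` into the first `n`, the shared vertex
`y = x_{n+1}` and the last `m`. The edge product factorizes into the `G₁`-product on
`(0, x₁, …, x_n, y)` and the `G₂`-product on `(y, x_{n+2}, …, x_{n+m+1}, x)`; translating the second
block by `-y` turns its integral into `J_m(G₂, x - y)`. Tonelli then gives
`J_{n+m+1}(G₁ ⊙ G₂, x) = ∫ J_n(G₁, y) J_m(G₂, x - y) dy`, the convolution after `y ↦ x - y`.
-/

section FinTuple

variable {α : Type*} [MeasureSpace α] [SigmaFinite (volume : Measure α)]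

theorem measurePreserving_finAppend (n k : ℕ) :
    MeasurePreserving (fun p : (Fin n → α) × (Fin k → α) => Fin.append p.1 p.2) := by
  have happend : (fun p : (Fin n → α) × (Fin k → α) => Fin.append p.1 p.2) =
      MeasurableEquiv.piCongrLeft (fun _ => α) finSumFinEquiv ∘
        (MeasurableEquiv.sumPiEquivProdPi fun _ => α).symm := by
    funext ⟨a, b⟩ i
    rw [Function.comp_apply, MeasurableEquiv.coe_piCongrLeft,
      MeasurableEquiv.coe_sumPiEquivProdPi_symm]
    refine Fin.addCases (fun i => ?_) (fun i => ?_) i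
    · rw [Fin.append_left, ← finSumFinEquiv_apply_left]
      exact (Equiv.piCongrLeft_sumInl (fun _ => α) _ a b i).symm
    · rw [Fin.append_right, ← finSumFinEquiv_apply_right]
      exact (Equiv.piCongrLeft_sumInr (fun _ => α) _ a b i).symm
  rw [happend]
  exact (volume_measurePreserving_piCongrLeft _ _).comp
    (volume_measurePreserving_sumPiEquivProdPi_symm _)

theorem measurePreserving_finCons (k : ℕ) :
    MeasurePreserving (fun p : α × (Fin k → α) => (Fin.cons p.1 p.2 : Fin (k + 1) → α)) := by
  have hcons : (fun p : α × (Fin k → α) => (Fin.cons p.1 p.2 : Fin (k + 1) → α)) =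
      (MeasurableEquiv.piFinSuccAbove (fun _ => α) 0).symm := by
    funext p
    simp [MeasurableEquiv.piFinSuccAbove_symm_apply, Fin.insertNthEquiv, Fin.insertNth_zero']
  rw [hcons]
  exact (volume_preserving_piFinSuccAbove (fun _ => α) 0).symm

theorem lintegral_finAppend {n k : ℕ} {f : (Fin (n + k) → α) → ℝ≥0∞} (hf : Measurable f) :
    ∫⁻ z, f z = ∫⁻ a : Fin n → α, ∫⁻ b : Fin k → α, f (Fin.append a b) := by
  have happ := measurePreserving_finAppend (α := α) n k
  rw [← happ.lintegral_comp hf, Measure.volume_eq_prod]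
  exact lintegral_prod (fun p => f (Fin.append p.1 p.2)) (hf.comp happ.measurable).aemeasurable

theorem lintegral_finCons {k : ℕ} {f : (Fin (k + 1) → α) → ℝ≥0∞} (hf : Measurable f) :
    ∫⁻ z, f z = ∫⁻ y, ∫⁻ b : Fin k → α, f (Fin.cons y b) := by
  have hcons := measurePreserving_finCons (α := α) k
  rw [← hcons.lintegral_comp hf, Measure.volume_eq_prod]
  exact lintegral_prod (fun p => f (Fin.cons p.1 p.2)) (hf.comp hcons.measurable).aemeasurable

theorem lintegral_finAppend_cons {n k : ℕ} {f : (Fin (n + (k + 1)) → α) → ℝ≥0∞}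
    (hf : Measurable f) :
    ∫⁻ z, f z = ∫⁻ y, ∫⁻ a : Fin n → α, ∫⁻ b : Fin k → α, f (Fin.append a (Fin.cons y b)) := by
  have happ := (measurePreserving_finAppend (α := α) n (k + 1)).measurable
  have hcons := (measurePreserving_finCons (α := α) k).measurable
  have hf' : Measurable fun p : ((Fin n → α) × α) × (Fin k → α) =>
      f (Fin.append p.1.1 (Fin.cons p.1.2 p.2)) :=
    hf.comp (happ.comp (measurable_fst.fst.prodMk
      (hcons.comp (measurable_fst.snd.prodMk measurable_snd))))
  calc ∫⁻ z, f z
      = ∫⁻ a : Fin n → α, ∫⁻ c : Fin (k + 1) → α, f (Fin.append a c) := lintegral_finAppend hf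
    _ = ∫⁻ a : Fin n → α, ∫⁻ y, ∫⁻ b : Fin k → α, f (Fin.append a (Fin.cons y b)) :=
        lintegral_congr fun a =>
          lintegral_finCons (hf.comp (happ.comp (measurable_const.prodMk measurable_id)))
    _ = _ := lintegral_lintegral_swap hf'.lintegral_prod_right'.aemeasurable

end FinTuple

section Configurations

variable {α : Type*} {k n m : ℕ}

def ptsBetween (u v : α) (b : Fin k → α) : Fin (k + 2) → α :=
  Fin.cons u (Fin.snoc b v)

theorem pts_eq_ptsBetween {d : ℕ} (x : EuclideanSpace ℝ (Fin d))
    (xs : Fin k → EuclideanSpace ℝ (Fin d)) : pts x xs = ptsBetween 0 x xs := rfl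

theorem ptsBetween_apply (u v : α) (b : Fin k → α) (i : Fin (k + 2)) :
    ptsBetween u v b i = if h₀ : i.1 = 0 then u else if h₁ : i.1 = k + 1 then v
      else b ⟨i.1 - 1, by omega⟩ := by
  induction i using Fin.cases with
  | zero => simp [ptsBetween]
  | succ j =>
    induction j using Fin.lastCases with
    | last => simp [ptsBetween]
    | cast l => simp [ptsBetween, l.isLt.ne]

theorem finAppend_cons_apply (a : Fin n → α) (y : α) (b : Fin m → α) (i : Fin (n + (m + 1))) :
    Fin.append a (Fin.cons y b) i = if h : i.1 < n then a ⟨i.1, h⟩ else if h' : i.1 = n then y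
      else b ⟨i.1 - n - 1, by omega⟩ := by
  refine Fin.addCases (fun j => ?_) (fun j => ?_) i
  · simp [Fin.append_left, j.isLt]
  · induction j using Fin.cases with
    | zero => simp [Fin.append_right]
    | succ l => simp [Fin.append_right]

@[simp] theorem emb1_val (i : Fin (n + 2)) : (emb1 n m i).1 = i.1 := rfl

@[simp] theorem emb2_val (j : Fin (m + 2)) : (emb2 n m j).1 = n + 1 + j.1 := rfl

theorem ptsBetween_append_cons_comp_emb1 (u y v : α) (a : Fin n → α) (b : Fin m → α) :
    ptsBetween u v (Fin.append a (Fin.cons y b : Fin (m + 1) → α)) ∘ emb1 n m =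
      ptsBetween u y a := by
  funext i
  simp only [Function.comp_apply, ptsBetween_apply, finAppend_cons_apply, emb1_val]
  have := i.isLt
  split_ifs <;> first | rfl | omega

theorem ptsBetween_append_cons_comp_emb2 (u y v : α) (a : Fin n → α) (b : Fin m → α) :
    ptsBetween u v (Fin.append a (Fin.cons y b : Fin (m + 1) → α)) ∘ emb2 n m =
      ptsBetween y v b := by
  funext i
  simp only [Function.comp_apply, ptsBetween_apply, finAppend_cons_apply, emb2_val]
  have := i.isLt
  split_ifs <;> first | rfl | omega | exact congrArg _ (Fin.ext (by simp only; omega))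

theorem ptsBetween_eq_add [AddGroup α] (u v : α) (b : Fin k → α) :
    ptsBetween u v b = fun i => ptsBetween 0 (v - u) (fun l => b l - u) i + u := by
  funext i
  simp only [ptsBetween_apply]
  split_ifs <;> simp only [zero_add, sub_add_cancel]

theorem measurable_ptsBetween [MeasurableSpace α] (u v : α) :
    Measurable (ptsBetween (k := k) u v) := by
  refine measurable_pi_lambda _ fun i => ?_
  simp only [ptsBetween_apply]
  split_ifs
  exacts [measurable_const, measurable_const, measurable_pi_apply _]

end Configurations

section Concatenation

variable {n m : ℕ}

theorem emb1_injective : Function.Injective (emb1 n m) :=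
  fun _ _ h => Fin.ext (congrArg Fin.val h :)

theorem emb2_injective : Function.Injective (emb2 n m) :=
  fun _ _ h => Fin.ext (by simpa using congrArg Fin.val h)

theorem emb1_lt_emb1 {i j : Fin (n + 2)} : emb1 n m i < emb1 n m j ↔ i < j := Iff.rfl

theorem emb2_lt_emb2 {i j : Fin (m + 2)} : emb2 n m i < emb2 n m j ↔ i < j := by
  rw [Fin.lt_def, Fin.lt_def, emb2_val, emb2_val]
  omega

def edgePairs {k : ℕ} (G : SimpleGraph (Fin k)) : Finset (Fin k × Fin k) :=
  univ.filter fun p => p.1 < p.2 ∧ G.Adj p.1 p.2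

theorem edgePairs_concatG (G₁ : SimpleGraph (Fin (n + 2))) (G₂ : SimpleGraph (Fin (m + 2))) :
    edgePairs (concatG G₁ G₂) =
      (edgePairs G₁).image (Prod.map (emb1 n m) (emb1 n m)) ∪
        (edgePairs G₂).image (Prod.map (emb2 n m) (emb2 n m)) := by
  ext ⟨u, v⟩
  simp only [edgePairs, concatG, SimpleGraph.fromRel_adj, mem_union, mem_image, mem_filter,
    mem_univ, true_and, Prod.exists, Prod.map_apply, Prod.mk.injEq]
  constructor
  · rintro ⟨hlt, -, (⟨i, j, h, rfl, rfl⟩ | ⟨i, j, h, rfl, rfl⟩) |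
      (⟨i, j, h, rfl, rfl⟩ | ⟨i, j, h, rfl, rfl⟩)⟩
    · exact .inl ⟨i, j, ⟨emb1_lt_emb1.1 hlt, h⟩, rfl, rfl⟩
    · exact .inr ⟨i, j, ⟨emb2_lt_emb2.1 hlt, h⟩, rfl, rfl⟩
    · exact .inl ⟨j, i, ⟨emb1_lt_emb1.1 hlt, h.symm⟩, rfl, rfl⟩
    · exact .inr ⟨j, i, ⟨emb2_lt_emb2.1 hlt, h.symm⟩, rfl, rfl⟩
  · rintro (⟨i, j, ⟨hlt, h⟩, rfl, rfl⟩ | ⟨i, j, ⟨hlt, h⟩, rfl, rfl⟩)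
    · exact ⟨emb1_lt_emb1.2 hlt, (emb1_lt_emb1.2 hlt).ne, .inl (.inl ⟨i, j, h, rfl, rfl⟩)⟩
    · exact ⟨emb2_lt_emb2.2 hlt, (emb2_lt_emb2.2 hlt).ne, .inl (.inr ⟨i, j, h, rfl, rfl⟩)⟩

/-- The two edge sets only meet at the shared vertex `n + 1`, so no edge lies in both. -/
theorem disjoint_image_edgePairs (G₁ : SimpleGraph (Fin (n + 2)))
    (G₂ : SimpleGraph (Fin (m + 2))) :
    Disjoint ((edgePairs G₁).image (Prod.map (emb1 n m) (emb1 n m)))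
      ((edgePairs G₂).image (Prod.map (emb2 n m) (emb2 n m))) := by
  simp only [disjoint_left, edgePairs, mem_image, mem_filter, mem_univ, true_and, Prod.exists,
    Prod.map_apply, not_exists, not_and]
  rintro _ ⟨i, j, -, rfl⟩ i' j' ⟨hij', -⟩ h
  have hj : n + 1 + j'.1 = j.1 := congrArg (fun p => p.2.1) h
  have := j.isLt
  rw [Fin.lt_def] at hij'
  omega

end Concatenation

section GraphIntegral

variable {d k n m : ℕ} {φ : EuclideanSpace ℝ (Fin d) → ℝ}

theorem edgeProdL_concatG (G₁ : SimpleGraph (Fin (n + 2))) (G₂ : SimpleGraph (Fin (m + 2)))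
    (z : Fin (n + m + 3) → EuclideanSpace ℝ (Fin d)) :
    edgeProdL φ (concatG G₁ G₂) z =
      edgeProdL φ G₁ (z ∘ emb1 n m) * edgeProdL φ G₂ (z ∘ emb2 n m) := by
  change ∏ p ∈ edgePairs (concatG G₁ G₂), _ = _
  rw [edgePairs_concatG, prod_union (disjoint_image_edgePairs G₁ G₂),
    prod_image (Prod.map_injective.2 ⟨emb1_injective, emb1_injective⟩).injOn,
    prod_image (Prod.map_injective.2 ⟨emb2_injective, emb2_injective⟩).injOn]
  rfl

theorem edgeProdL_add_const (G : SimpleGraph (Fin k)) (z : Fin k → EuclideanSpace ℝ (Fin d))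
    (c : EuclideanSpace ℝ (Fin d)) :
    edgeProdL φ G (fun i => z i + c) = edgeProdL φ G z :=
  prod_congr rfl fun p _ => by rw [add_sub_add_right_eq_sub]

theorem measurable_edgeProdL (hφ : Measurable φ) (G : SimpleGraph (Fin k)) :
    Measurable (edgeProdL φ G) :=
  Finset.measurable_prod _ fun _ _ => ENNReal.measurable_ofReal.comp
    (hφ.comp ((measurable_pi_apply _).sub (measurable_pi_apply _)))

theorem lintegral_edgeProdL_ptsBetween (G : SimpleGraph (Fin (k + 2)))
    (u v : EuclideanSpace ℝ (Fin d)) :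
    ∫⁻ b, edgeProdL φ G (ptsBetween u v b) = JfunL φ k G (v - u) := by
  simp_rw [ptsBetween_eq_add u v, edgeProdL_add_const]
  exact lintegral_sub_right_eq_self (fun b => edgeProdL φ G (ptsBetween 0 (v - u) b)) (fun _ => u)

theorem JfunL_concatG (hφ : Measurable φ) (G₁ : SimpleGraph (Fin (n + 2)))
    (G₂ : SimpleGraph (Fin (m + 2))) (x : EuclideanSpace ℝ (Fin d)) :
    JfunL φ (n + m + 1) (concatG G₁ G₂) x = ∫⁻ y, JfunL φ n G₁ y * JfunL φ m G₂ (x - y) := by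
  have hmeas_edgeProdL {k : ℕ} (G : SimpleGraph (Fin (k + 2))) (u v : EuclideanSpace ℝ (Fin d)) :
      Measurable fun b => edgeProdL φ G (ptsBetween u v b) :=
    (measurable_edgeProdL hφ G).comp (measurable_ptsBetween u v)
  calc JfunL φ (n + m + 1) (concatG G₁ G₂) x
      = ∫⁻ y, ∫⁻ a : Fin n → _, ∫⁻ b : Fin m → _, edgeProdL φ (concatG G₁ G₂)
          (ptsBetween 0 x (Fin.append a (Fin.cons y b) : Fin (n + (m + 1)) → _)) :=
        lintegral_finAppend_cons (hmeas_edgeProdL (k := n + (m + 1)) (concatG G₁ G₂) 0 x)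
    _ = ∫⁻ y, ∫⁻ a, ∫⁻ b, edgeProdL φ G₁ (pts y a) * edgeProdL φ G₂ (ptsBetween y x b) := by
        simp only [edgeProdL_concatG, ptsBetween_append_cons_comp_emb1, pts_eq_ptsBetween,
          ptsBetween_append_cons_comp_emb2]
    _ = ∫⁻ y, ∫⁻ a, edgeProdL φ G₁ (pts y a) * JfunL φ m G₂ (x - y) := by
        simp only [lintegral_const_mul _ (hmeas_edgeProdL G₂ _ x), lintegral_edgeProdL_ptsBetween]
    _ = ∫⁻ y, JfunL φ n G₁ y * JfunL φ m G₂ (x - y) := by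
        simp only [lintegral_mul_const _ (hmeas_edgeProdL G₁ 0 _), JfunL, pts_eq_ptsBetween]

end GraphIntegral

theorem JfunL_concat_general
    {d : ℕ} (φ : EuclideanSpace ℝ (Fin d) → ℝ)
    (hφmeas : Measurable φ)
    (n m : ℕ) (G₁ : SimpleGraph (Fin (n + 2))) (G₂ : SimpleGraph (Fin (m + 2)))
    (x : EuclideanSpace ℝ (Fin d)) :
    (∫⁻ y : EuclideanSpace ℝ (Fin d), JfunL φ n G₁ (x - y) * JfunL φ m G₂ y) =
      JfunL φ (n + m + 1) (concatG G₁ G₂) x := by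
  rw [JfunL_concatG hφmeas, ← lintegral_sub_left_eq_self _ x]
  simp only [sub_sub_cancel]

/-- `(J_n(G₁,·) ∗ J_m(G₂,·))(x) = J_{n+m+1}(G₁ ⊙ G₂, x)`, where the convolution of
nonnegative functions is `(f∗g)(x) = ∫ f(x-y) g(y) dy ∈ [0,∞]`. -/
theorem JfunL_concat
    {d : ℕ} (hd : 1 ≤ d) (φ : EuclideanSpace ℝ (Fin d) → ℝ)
    (hφmeas : Measurable φ) (hφrange : ∀ x, φ x ∈ Set.Icc (0 : ℝ) 1)
    (hφsymm : ∀ x, φ (-x) = φ x)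
    (hφint : Integrable φ) (hφpos : 0 < ∫ x, φ x)
    (n m : ℕ) (G₁ : SimpleGraph (Fin (n + 2))) (G₂ : SimpleGraph (Fin (m + 2)))
    (hG₁ : G₁.Connected) (hG₂ : G₂.Connected)
    (x : EuclideanSpace ℝ (Fin d)) :
    (∫⁻ y : EuclideanSpace ℝ (Fin d), JfunL φ n G₁ (x - y) * JfunL φ m G₂ y) =
      JfunL φ (n + m + 1) (concatG G₁ G₂) x :=
  JfunL_concat_general φ hφmeas n m G₁ G₂ x

end
end

section
/- Let n ∈ ℕ₀ and let G be a simple graph with vertex set {0,1,…,n+1} that is NOT connected. Then the alternating sum vanishes: π_n(G) = Σ_{I ⊆ [n]} (−1)^{n−|I|} 1{0 ↔ n+1 in G|I} = 0. -/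
open Finset
open scoped Classical

noncomputable section

lemma card_interiorVerts (n : ℕ) : (interiorVerts n).card = n := by
  have h : interiorVerts n = Finset.univ \ {0, Fin.last (n + 1)} := by
    ext v
    simp [interiorVerts]
  have hne : (0 : Fin (n+2)) ≠ Fin.last (n+1) := by
    simp [Fin.ext_iff]
  rw [h, Finset.card_sdiff_of_subset (by simp), Finset.card_pair hne]
  simp

lemma connIn_insert_iff {n : ℕ} (G : SimpleGraph (Fin (n + 2))) (v : Fin (n+2))
    (hv : ¬ G.Reachable 0 v) (S : Set (Fin (n+2))) :
    ConnIn G 0 (Fin.last (n+1)) (insert v S) ↔ ConnIn G 0 (Fin.last (n+1)) S := by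
  constructor
  · rintro ⟨w, hw⟩
    refine ⟨w, fun u hu => ?_⟩
    have hvw : v ∉ w.support := fun hmem => hv ⟨w.takeUntil v hmem⟩
    rcases hw u hu with h | h | h
    · exact Or.inl h
    · exact Or.inr (Or.inl h)
    · rcases Set.mem_insert_iff.mp h with h | h
      · exact absurd (h ▸ hu) hvw
      · exact Or.inr (Or.inr h)
  · rintro ⟨w, hw⟩
    exact ⟨w, fun u hu => (hw u hu).imp id (Or.imp id (Set.mem_insert_of_mem v))⟩

/-- If the graph `G` on `{0,…,n+1}` is not connected, then `π_n(G) = 0`. -/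
theorem piFun_eq_zero_of_not_connected (n : ℕ)
    (G : SimpleGraph (Fin (n + 2))) (hG : ¬ G.Connected) :
    piFun n G = 0 := by
  classical
  by_cases h0 : G.Reachable 0 (Fin.last (n + 1))
  · have hex : ∃ v, ¬ G.Reachable 0 v := by
      by_contra h
      push_neg at h
      exact hG (SimpleGraph.Connected.mk fun u w => (h u).symm.trans (h w))
    obtain ⟨v, hv⟩ := hex
    have hv0 : v ≠ 0 := by rintro rfl; exact hv (.refl 0)
    have hvl : v ≠ Fin.last (n+1) := by rintro rfl; exact hv h0
    have hvmem : v ∈ interiorVerts n := by simp [interiorVerts, hv0, hvl]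
    unfold piFun
    set f : Finset (Fin (n+2)) → ℤ := fun I =>
      (-1:ℤ)^(n - I.card) * (if ConnIn G 0 (Fin.last (n+1)) ↑I then 1 else 0) with hf
    have key : ∀ I ∈ (interiorVerts n).powerset, v ∉ I → f (insert v I) = - f I := by
      intro I hI hvI
      have hsub : I ⊆ interiorVerts n := Finset.mem_powerset.mp hI
      have hcard : I.card < n := by
        have := Finset.card_lt_card ((Finset.ssubset_iff_of_subset hsub).mpr ⟨v, hvmem, hvI⟩)
        simpa [card_interiorVerts] using this
      have hic : (insert v I).card = I.card + 1 := Finset.card_insert_of_notMem hvI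
      have hpow : (-1:ℤ)^(n - (insert v I).card) = -(-1:ℤ)^(n - I.card) := by
        rw [hic]
        have h' : n - I.card = (n - (I.card + 1)) + 1 := by omega
        rw [h', pow_succ]
        ring
      have hconn : ConnIn G 0 (Fin.last (n+1)) ↑(insert v I) ↔ ConnIn G 0 (Fin.last (n+1)) ↑I := by
        rw [Finset.coe_insert]
        exact connIn_insert_iff G v hv ↑I
      simp only [hf, hpow, hconn]
      ring
    refine Finset.sum_involution
      (fun I _ => if v ∈ I then I.erase v else insert v I) ?_ ?_ ?_ ?_
    · intro I hI
      by_cases h : v ∈ I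
      · simp only [h, if_true]
        have hIe : I.erase v ∈ (interiorVerts n).powerset :=
          Finset.mem_powerset.mpr ((Finset.erase_subset v I).trans (Finset.mem_powerset.mp hI))
        have hk := key (I.erase v) hIe (Finset.notMem_erase v I)
        rw [Finset.insert_erase h] at hk
        show f I + f (I.erase v) = 0
        rw [hk]; ring
      · simp only [h, if_false]
        have hk := key I hI h
        show f I + f (insert v I) = 0
        rw [hk]; ring
    · intro I hI _
      by_cases h : v ∈ I
      · simp only [h, if_true]
        exact fun he => (he ▸ Finset.notMem_erase v I) h
      · simp only [h, if_false]
        exact fun he => h (he ▸ Finset.mem_insert_self v I)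
    · intro I hI
      by_cases h : v ∈ I
      · simp only [h, if_true]
        exact Finset.mem_powerset.mpr ((Finset.erase_subset v I).trans (Finset.mem_powerset.mp hI))
      · simp only [h, if_false]
        exact Finset.mem_powerset.mpr (Finset.insert_subset hvmem (Finset.mem_powerset.mp hI))
    · intro I hI
      by_cases h : v ∈ I
      · simp [h, Finset.insert_erase h]
      · simp [h, Finset.erase_insert h]
  · unfold piFun
    have hnone : ∀ I : Finset (Fin (n+2)), ¬ ConnIn G 0 (Fin.last (n+1)) ↑I := by
      rintro I ⟨w, -⟩
      exact h0 ⟨w⟩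
    simp [hnone]

end
end
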